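/- For any finite Coxeter group W with simple reflections S and any conjugacy class C of W that is not elliptic, every element of C of minimal length in C lies in some proper standard parabolic subgroup W_J, J ⊊ S. -/

import Mathlib

/-!
Choose `y` of minimal length such that `u = y⁻¹ w' y` lies in a proper standard parabolic
subgroup `W_I`. Then `y` is the shortest element of `y W_I`, so it has no right inversion in `W_I`.

The parity `η w t` (`inversionParity`) of the number of occurrences of a reflection `t` in the
right inversion sequence of a word for `w` does not depend on the word, satisfies the cocycle
rule `η (a b) t = η b t + η a (b t b⁻¹)`, and equals `1` exactly when `t` is a right inversion
of `w` (strong exchange). Comparing `η` on the two sides of `w' y = y u` shows that conjugation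
by `y` maps the right inversions of `u` into those of `w'`, hence onto them since
`ℓ w' ≤ ℓ u`. So all right inversions of `w'` lie in `y W_I y⁻¹`.

Every element `x` lies in the standard parabolic subgroup generated by the simple reflections
that belong to the subgroup generated by the right inversions of `x`. For `x = w'`, either this
set of simple reflections is proper, or `y W_I y⁻¹ = W`, whence `W_I = W` contains `w'`.
-/

theorem conj_eq_iff_eq_conj {G : Type*} [Group G] {a t b : G} :
    a * t * a⁻¹ = b ↔ t = a⁻¹ * b * a := by
  constructor <;> rintro rfl <;> group

theorem inv_mul_mul_eq_pow_mul_iff {G : Type*} [Group G] {q x t : G} (h : x * q⁻¹ = q * x)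
    (r : ℕ) : q⁻¹ * t * q = q ^ r * x ↔ t = q ^ (r + 2) * x := by
  have : q * (q ^ r * x) * q⁻¹ = q ^ (r + 2) * x := by
    rw [mul_assoc, mul_assoc, h, ← mul_assoc, ← mul_assoc, ← pow_succ', ← pow_succ]
  rw [← this]
  constructor
  · intro h'
    simp [← h', mul_assoc]
  · rintro rfl
    simp [mul_assoc]

theorem ZMod.eq_zero_iff_ne_one {x : ZMod 2} : x = 0 ↔ x ≠ 1 := by
  revert x; decide

theorem Subgroup.mul_mul_inv_mem_iff {G : Type*} [Group G] (H : Subgroup G) {b t : G}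
    (hb : b ∈ H) : b * t * b⁻¹ ∈ H ↔ t ∈ H := by
  rw [H.mul_mem_cancel_right (inv_mem hb), H.mul_mem_cancel_left hb]

namespace CoxeterSystem

open scoped Classical

variable {B W : Type*} [Group W] {M : CoxeterMatrix B} (cs : CoxeterSystem M W)

local prefix:100 "s" => cs.simple
local prefix:100 "π" => cs.wordProd
local prefix:100 "ℓ" => cs.length
local prefix:100 "ris" => cs.rightInvSeq

theorem simple_mul_mul_simple_eq_iff (i : B) {t u : W} :
    s i * t * s i = u ↔ t = s i * u * s i := by
  simpa only [inv_simple] using conj_eq_iff_eq_conj (a := s i) (t := t) (b := u)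

-- `s i` acting on pairs `(t, ε)` as in the permutation-representation proof of the strong
-- exchange condition, with the sign `±1` written additively in `ZMod 2`.
noncomputable def parityPerm (i : B) : Equiv.Perm (W × ZMod 2) :=
  Function.Involutive.toPerm (fun x => (s i * x.1 * s i, x.2 + if x.1 = s i then 1 else 0)) <| by
    rintro ⟨t, ε⟩
    have hsi : s i * t * s i = s i ↔ t = s i := by
      rw [simple_mul_mul_simple_eq_iff, simple_mul_simple_self, one_mul]
    simp only [hsi, add_assoc, CharTwo.add_self_eq_zero, add_zero, Prod.mk.injEq, and_true]
    simp [mul_assoc]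

theorem parityPerm_apply (i : B) (t : W) (ε : ZMod 2) :
    cs.parityPerm i (t, ε) = (s i * t * s i, ε + if t = s i then 1 else 0) := rfl

theorem parityPerm_mul_parityPerm_apply (i j : B) (t : W) (ε : ZMod 2) :
    (cs.parityPerm i * cs.parityPerm j) (t, ε) =
      ((s j * s i)⁻¹ * t * (s j * s i),
        ε + ((if t = s j then 1 else 0) + if t = s j * s i * s j then 1 else 0)) := by
  rw [Equiv.Perm.mul_apply, parityPerm_apply, parityPerm_apply, simple_mul_mul_simple_eq_iff,
    add_assoc, Prod.mk.injEq]
  exact ⟨by simp [mul_assoc], rfl⟩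

theorem parityPerm_mul_parityPerm_pow_apply (i j : B) (n : ℕ) (t : W) (ε : ZMod 2) :
    ((cs.parityPerm i * cs.parityPerm j) ^ n) (t, ε) =
      (((s j * s i) ^ n)⁻¹ * t * (s j * s i) ^ n,
        ε + ∑ r ∈ Finset.range (2 * n), if t = (s j * s i) ^ r * s j then 1 else 0) := by
  induction n generalizing t ε with
  | zero => simp
  | succ n ih =>
    have hshift (r : ℕ) :
        (s j * s i)⁻¹ * t * (s j * s i) = (s j * s i) ^ r * s j ↔
          t = (s j * s i) ^ (r + 2) * s j := by
      refine inv_mul_mul_eq_pow_mul_iff ?_ r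
      simp [mul_assoc]
    rw [pow_succ, Equiv.Perm.mul_apply, parityPerm_mul_parityPerm_apply, ih, Prod.mk.injEq]
    refine ⟨by simp only [pow_succ', mul_inv_rev, mul_assoc], ?_⟩
    rw [show 2 * (n + 1) = 2 * n + 1 + 1 by ring, Finset.sum_range_succ', Finset.sum_range_succ']
    simp only [hshift, add_assoc, Nat.reduceAdd, zero_add, pow_zero, pow_one, one_mul]
    abel

theorem isLiftable_parityPerm : M.IsLiftable cs.parityPerm := by
  intro i j
  ext ⟨t, ε⟩ : 1
  -- the `2 * M i j` terms of the sum come in equal pairs since `(s j * s i) ^ M i j = 1`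
  rw [Equiv.Perm.one_apply, parityPerm_mul_parityPerm_pow_apply, simple_mul_simple_pow',
    two_mul, Finset.sum_range_add]
  simp [pow_add, simple_mul_simple_pow', CharTwo.add_self_eq_zero]

noncomputable def parityRep : W →* Equiv.Perm (W × ZMod 2) :=
  cs.lift ⟨cs.parityPerm, cs.isLiftable_parityPerm⟩

noncomputable def inversionParity (w t : W) : ZMod 2 := (cs.parityRep w (t, 0)).2

theorem parityRep_wordProd_apply (ω : List B) (t : W) (ε : ZMod 2) :
    cs.parityRep (π ω) (t, ε) = (π ω * t * (π ω)⁻¹, ε + (ris ω).count t) := by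
  induction ω generalizing t ε with
  | nil => simp [rightInvSeq]
  | cons i ω ih =>
    rw [wordProd_cons, map_mul, Equiv.Perm.mul_apply, ih, parityRep, lift_apply_simple,
      parityPerm_apply, conj_eq_iff_eq_conj, rightInvSeq, List.count_cons, Prod.mk.injEq]
    refine ⟨by simp [mul_assoc], ?_⟩
    simp only [beq_iff_eq, eq_comm (a := t), add_assoc]
    push_cast
    abel

theorem inversionParity_wordProd (ω : List B) (t : W) :
    cs.inversionParity (π ω) t = (ris ω).count t := by
  rw [inversionParity, parityRep_wordProd_apply, zero_add]

theorem parityRep_apply (w t : W) (ε : ZMod 2) :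
    cs.parityRep w (t, ε) = (w * t * w⁻¹, ε + cs.inversionParity w t) := by
  obtain ⟨ω, rfl⟩ := cs.wordProd_surjective w
  rw [parityRep_wordProd_apply, inversionParity_wordProd]

theorem inversionParity_one (t : W) : cs.inversionParity 1 t = 0 := by
  simp [inversionParity]

theorem inversionParity_simple (i : B) (t : W) :
    cs.inversionParity (s i) t = if t = s i then 1 else 0 := by
  rw [inversionParity, parityRep, lift_apply_simple, parityPerm_apply, zero_add]

theorem inversionParity_mul (a b t : W) :
    cs.inversionParity (a * b) t =
      cs.inversionParity b t + cs.inversionParity a (b * t * b⁻¹) := by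
  rw [inversionParity, map_mul, Equiv.Perm.mul_apply, parityRep_apply, parityRep_apply, zero_add]

theorem inversionParity_inv (w t : W) :
    cs.inversionParity w⁻¹ (w * t * w⁻¹) = cs.inversionParity w t := by
  have h := cs.inversionParity_mul w⁻¹ w t
  rw [inv_mul_cancel, inversionParity_one, eq_comm, add_eq_zero_iff_eq_neg, CharTwo.neg_eq] at h
  exact h.symm

theorem IsReflection.inversionParity_self {t : W} (ht : cs.IsReflection t) :
    cs.inversionParity t t = 1 := by
  obtain ⟨v, i, rfl⟩ := ht
  have hconj : v⁻¹ * (v * s i * v⁻¹) * v⁻¹⁻¹ = s i := by group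
  rw [inversionParity_mul, inversionParity_inv, hconj, inversionParity_mul, mul_inv_cancel_right,
    inversionParity_simple, if_pos rfl, add_left_comm, CharTwo.add_self_eq_zero, add_zero]

theorem mem_rightInvSeq_of_inversionParity_eq_one {ω : List B} {t : W}
    (h : cs.inversionParity (π ω) t = 1) : t ∈ ris ω := by
  rw [inversionParity_wordProd] at h
  by_contra hmem
  rw [List.count_eq_zero.mpr hmem, Nat.cast_zero] at h
  exact zero_ne_one h

theorem isRightInversion_of_inversionParity_eq_one {w t : W} (h : cs.inversionParity w t = 1) :
    cs.IsRightInversion w t := by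
  obtain ⟨ω, hω, rfl⟩ := cs.exists_isReduced w
  exact cs.isRightInversion_of_mem_rightInvSeq hω (cs.mem_rightInvSeq_of_inversionParity_eq_one h)

theorem inversionParity_eq_one_iff {t : W} (ht : cs.IsReflection t) (w : W) :
    cs.inversionParity w t = 1 ↔ cs.IsRightInversion w t := by
  refine ⟨cs.isRightInversion_of_inversionParity_eq_one, fun hwt => ?_⟩
  by_contra hne
  have h : cs.inversionParity (w * t) t = 1 := by
    rw [inversionParity_mul, ht.inversionParity_self, mul_inv_cancel_right,
      ZMod.eq_zero_iff_ne_one.mpr hne, add_zero]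
  have := (cs.isRightInversion_of_inversionParity_eq_one h).2
  rw [mul_assoc, ht.mul_self, mul_one] at this
  exact lt_asymm hwt.2 this

theorem mem_closure_simple_of_inversionParity_eq_one {I : Set B} {r t : W}
    (hr : r ∈ Subgroup.closure (cs.simple '' I)) (ht : cs.inversionParity r t = 1) :
    t ∈ Subgroup.closure (cs.simple '' I) := by
  induction hr using Subgroup.closure_induction generalizing t with
  | mem x hx =>
    obtain ⟨i, hi, rfl⟩ := hx
    rw [inversionParity_simple, ite_eq_left_iff, not_imp_comm] at ht
    exact ht zero_ne_one ▸ Subgroup.subset_closure ⟨i, hi, rfl⟩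
  | one => exact absurd (ht.symm.trans (cs.inversionParity_one t)) one_ne_zero
  | mul a b _ hb iha ihb =>
    rw [inversionParity_mul] at ht
    by_cases hbt : cs.inversionParity b t = 1
    · exact ihb hbt
    · rw [ZMod.eq_zero_iff_ne_one.mpr hbt, zero_add] at ht
      exact (Subgroup.mul_mul_inv_mem_iff _ hb).mp (iha ht)
  | inv a ha iha =>
    have hconj : a * (a⁻¹ * t * a) * a⁻¹ = t := by group
    rw [← hconj, inversionParity_inv] at ht
    exact (Subgroup.mul_mul_inv_mem_iff _ (inv_mem ha)).mp (by rw [inv_inv]; exact iha ht)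

theorem mem_closure_simple_of_isRightInversion {I : Set B} {r t : W}
    (hr : r ∈ Subgroup.closure (cs.simple '' I)) (ht : cs.IsRightInversion r t) :
    t ∈ Subgroup.closure (cs.simple '' I) :=
  cs.mem_closure_simple_of_inversionParity_eq_one hr
    ((cs.inversionParity_eq_one_iff ht.1 r).mpr ht)

def rightInversions (w : W) : Set W := {t | cs.IsRightInversion w t}

theorem rightInversions_wordProd {ω : List B} (hω : cs.IsReduced ω) :
    cs.rightInversions (π ω) = ((ris ω).toFinset : Set W) := by
  ext t
  rw [List.coe_toFinset]
  exact ⟨fun ht => cs.mem_rightInvSeq_of_inversionParity_eq_one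
    ((cs.inversionParity_eq_one_iff ht.1 _).mpr ht), cs.isRightInversion_of_mem_rightInvSeq hω⟩

theorem finite_rightInversions (w : W) : (cs.rightInversions w).Finite := by
  obtain ⟨ω, hω, rfl⟩ := cs.exists_isReduced w
  rw [rightInversions_wordProd cs hω]
  exact Finset.finite_toSet _

theorem ncard_rightInversions (w : W) : (cs.rightInversions w).ncard = ℓ w := by
  obtain ⟨ω, hω, rfl⟩ := cs.exists_isReduced w
  rw [rightInversions_wordProd cs hω, Set.ncard_coe_finset,
    List.toFinset_card_of_nodup hω.nodup_rightInvSeq, length_rightInvSeq, hω.eq]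

def inversionSupport (w : W) : Set B := {i | s i ∈ Subgroup.closure (cs.rightInversions w)}

theorem closure_rightInversions_mul_simple_le {w : W} {i : B} (hi : cs.IsRightDescent w i) :
    Subgroup.closure (cs.rightInversions (w * s i)) ≤
      Subgroup.closure (cs.rightInversions w) := by
  have hsi : s i ∈ Subgroup.closure (cs.rightInversions w) :=
    Subgroup.subset_closure ((cs.isRightInversion_simple_iff_isRightDescent w i).mpr hi)
  rw [Subgroup.closure_le]
  intro t ht
  by_cases hts : t = s i
  · exact hts ▸ hsi
  have h := (cs.inversionParity_eq_one_iff ht.1 _).mpr ht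
  rw [inversionParity_mul, inversionParity_simple, if_neg hts, zero_add] at h
  exact (Subgroup.mul_mul_inv_mem_iff _ hsi).mp
    (Subgroup.subset_closure (cs.isRightInversion_of_inversionParity_eq_one h))

theorem mem_closure_simple_inversionSupport (w : W) :
    w ∈ Subgroup.closure (cs.simple '' cs.inversionSupport w) := by
  induction h : ℓ w using Nat.strong_induction_on generalizing w with
  | _ n ih =>
  rcases eq_or_ne w 1 with rfl | hw
  · exact one_mem _
  obtain ⟨i, hi⟩ := cs.exists_rightDescent_of_ne_one hw
  have hmono : cs.inversionSupport (w * s i) ⊆ cs.inversionSupport w :=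
    fun j hj => cs.closure_rightInversions_mul_simple_le hi hj
  have hw' := ih _ (h ▸ hi) (w * s i) rfl
  have hsi : s i ∈ Subgroup.closure (cs.simple '' cs.inversionSupport w) :=
    Subgroup.subset_closure ⟨i, Subgroup.subset_closure
      ((cs.isRightInversion_simple_iff_isRightDescent w i).mpr hi), rfl⟩
  simpa [mul_assoc] using mul_mem (Subgroup.closure_mono (Set.image_mono hmono) hw') hsi

def IsMinimalInLeftCoset (I : Set B) (y : W) : Prop :=
  ∀ r ∈ Subgroup.closure (cs.simple '' I), ℓ y ≤ ℓ (y * r)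

namespace IsMinimalInLeftCoset

variable {cs} {I : Set B} {y : W}

theorem not_isRightInversion (hy : cs.IsMinimalInLeftCoset I y) {t : W}
    (ht : t ∈ Subgroup.closure (cs.simple '' I)) : ¬cs.IsRightInversion y t :=
  fun hyt => (hy t ht).not_gt hyt.2

theorem inversionParity_eq_zero (hy : cs.IsMinimalInLeftCoset I y) {t : W}
    (ht : t ∈ Subgroup.closure (cs.simple '' I)) : cs.inversionParity y t = 0 :=
  ZMod.eq_zero_iff_ne_one.mpr fun h =>
    hy.not_isRightInversion ht (cs.isRightInversion_of_inversionParity_eq_one h)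

theorem isRightInversion_conj (hy : cs.IsMinimalInLeftCoset I y) {x v t : W}
    (hv : v ∈ Subgroup.closure (cs.simple '' I)) (hxy : x * y = y * v)
    (ht : cs.IsRightInversion v t) : cs.IsRightInversion x (y * t * y⁻¹) := by
  have htI := cs.mem_closure_simple_of_isRightInversion hv ht
  have key := congrArg (cs.inversionParity · t) hxy
  simp only [inversionParity_mul] at key
  rw [hy.inversionParity_eq_zero htI,
    hy.inversionParity_eq_zero ((Subgroup.mul_mul_inv_mem_iff _ hv).mpr htI),
    zero_add, add_zero, (cs.inversionParity_eq_one_iff ht.1 v).mpr ht] at key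
  exact cs.isRightInversion_of_inversionParity_eq_one key

theorem rightInversions_eq_image_conj (hy : cs.IsMinimalInLeftCoset I y) {x v : W}
    (hv : v ∈ Subgroup.closure (cs.simple '' I)) (hxy : x * y = y * v) (hlen : ℓ x ≤ ℓ v) :
    cs.rightInversions x = MulAut.conj y '' cs.rightInversions v := by
  refine (Set.eq_of_subset_of_ncard_le ?_ ?_ (cs.finite_rightInversions x)).symm
  · rintro _ ⟨t, ht, rfl⟩
    exact hy.isRightInversion_conj hv hxy ht
  · rw [Set.ncard_image_of_injective _ (MulAut.conj y).injective, ncard_rightInversions,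
      ncard_rightInversions]
    exact hlen

theorem exists_ne_univ_mem_closure_simple (hy : cs.IsMinimalInLeftCoset I y)
    (hI : I ≠ Set.univ) {x : W} (hx : y⁻¹ * x * y ∈ Subgroup.closure (cs.simple '' I))
    (hlen : ℓ x ≤ ℓ (y⁻¹ * x * y)) :
    ∃ J : Set B, J ≠ Set.univ ∧ x ∈ Subgroup.closure (cs.simple '' J) := by
  have hxy : x * y = y * (y⁻¹ * x * y) := by group
  have hN := hy.rightInversions_eq_image_conj hx hxy hlen
  by_cases hJ : cs.inversionSupport x = Set.univ
  · refine ⟨I, hI, ?_⟩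
    set Q := (Subgroup.closure (cs.simple '' I)).comap (MulAut.conj y⁻¹).toMonoidHom
    have hle : Subgroup.closure (cs.rightInversions x) ≤ Q := by
      rw [Subgroup.closure_le, hN]
      rintro _ ⟨t, ht, rfl⟩
      simpa [Q, MulAut.conj_apply, mul_assoc] using cs.mem_closure_simple_of_isRightInversion hx ht
    have htop : Q = ⊤ := by
      rw [eq_top_iff, ← cs.subgroup_closure_range_simple, Subgroup.closure_le]
      rintro _ ⟨i, rfl⟩
      exact hle (show i ∈ cs.inversionSupport x from hJ ▸ Set.mem_univ i)
    have hyI : y ∈ Subgroup.closure (cs.simple '' I) := by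
      simpa [Q, MulAut.conj_apply] using (Subgroup.eq_top_iff' _).mp htop y
    simpa [mul_assoc] using (Subgroup.mul_mul_inv_mem_iff _ hyI).mpr hx
  · exact ⟨_, hJ, cs.mem_closure_simple_inversionSupport x⟩

end IsMinimalInLeftCoset

end CoxeterSystem

theorem stmt_9_general {B W : Type*} [Group W] {M : CoxeterMatrix B}
    (cs : CoxeterSystem M W) (w : W)
    (hnotell : ∃ J : Set B, J ≠ Set.univ ∧
      ∃ v : W, IsConj w v ∧ v ∈ Subgroup.closure (cs.simple '' J))
    (w' : W) (hconj : IsConj w w')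
    (hmin : ∀ v : W, IsConj w v → cs.length w' ≤ cs.length v) :
    ∃ J : Set B, J ≠ Set.univ ∧ w' ∈ Subgroup.closure (cs.simple '' J) := by
  obtain ⟨I₀, hI₀, v, hwv, hv⟩ := hnotell
  obtain ⟨g, hg⟩ := isConj_iff.mp (hconj.symm.trans hwv)
  obtain ⟨⟨I, y⟩, ⟨hI, hu⟩, hy⟩ :=
    (measure fun p : Set B × W => cs.length p.2).wf.has_min
      {p | p.1 ≠ Set.univ ∧ p.2⁻¹ * w' * p.2 ∈ Subgroup.closure (cs.simple '' p.1)}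
      ⟨(I₀, g⁻¹), hI₀, by simpa [hg]⟩
  have hy_min : cs.IsMinimalInLeftCoset I y := fun r hr => by
    refine not_lt.mp (hy (I, y * r) ⟨hI, ?_⟩)
    have hconj : (y * r)⁻¹ * w' * (y * r) = r⁻¹ * (y⁻¹ * w' * y) * r⁻¹⁻¹ := by group
    simpa only [hconj] using (Subgroup.mul_mul_inv_mem_iff _ (inv_mem hr)).mpr hu
  exact hy_min.exists_ne_univ_mem_closure_simple hI hu
    (hmin _ (hconj.trans (isConj_iff.mpr ⟨y⁻¹, by group⟩)))

/-- (Howlett, Geck–Pfeiffer.) In a finite Coxeter group W, if a conjugacy class C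
is not elliptic (i.e. C meets some proper standard parabolic subgroup W_J, J ⊊ S),
then every element of C of minimal length in C lies in some proper standard
parabolic subgroup. -/
theorem stmt_9 {B W : Type*} [Group W] {M : CoxeterMatrix B}
    (cs : CoxeterSystem M W) [Finite W] (w : W)
    (hnotell : ∃ J : Set B, J ≠ Set.univ ∧
      ∃ v : W, IsConj w v ∧ v ∈ Subgroup.closure (cs.simple '' J))
    (w' : W) (hconj : IsConj w w')
    (hmin : ∀ v : W, IsConj w v → cs.length w' ≤ cs.length v) :
    ∃ J : Set B, J ≠ Set.univ ∧ w' ∈ Subgroup.closure (cs.simple '' J) :=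
  stmt_9_general cs w hnotell w' hconj hmin
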